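/- arXiv:2507.18528 — 3 statements merged into one kernel-verified Lean document; each statement's English description precedes it below -/
import Mathlib

section
/- Let X and W be real Banach spaces and ι : X → W an injective continuous linear map. Let J : X → ℝ be a C¹ functional with J(0) = 0 which satisfies the (wCPS)_β condition for every β ∈ ℝ. Assume there exist constants r > 0 and ϱ > 0 and a point e ∈ X such that: (i) every u ∈ X with ‖ι(u)‖_W = r satisfies J(u) ≥ ϱ; (ii) ‖ι(e)‖_W > r and J(e) < ϱ. Then J has a critical point u* ∈ X, i.e. dJ(u*) = 0, such that J(u*) = inf_{γ ∈ Γ} sup_{σ ∈ [0,1]} J(γ(σ)) ≥ ϱ, where Γ = {γ ∈ C([0,1], X) : γ(0) = 0, γ(1) = e}. -/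
open Filter Topology

namespace MP

variable {X : Type*} [NormedAddCommGroup X] [NormedSpace ℝ X]

/-- weighted edge length -/
noncomputable def edg (a b : X) : ℝ := ‖a - b‖ / (1 + min ‖a‖ ‖b‖)

lemma min_norm_nonneg (a b : X) : (0:ℝ) ≤ min ‖a‖ ‖b‖ :=
  le_min (norm_nonneg a) (norm_nonneg b)

lemma edg_nonneg (a b : X) : 0 ≤ edg a b := by
  have := min_norm_nonneg a b
  exact div_nonneg (norm_nonneg _) (by linarith)

lemma edg_comm (a b : X) : edg a b = edg b a := by
  rw [edg, edg, norm_sub_rev, min_comm]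

lemma edg_le_norm (a b : X) : edg a b ≤ ‖a - b‖ := by
  have := min_norm_nonneg a b
  exact div_le_self (norm_nonneg _) (by linarith)

lemma edg_le (a b : X) {d : ℝ} (hd : 0 < d) (h : d ≤ 1 + min ‖a‖ ‖b‖) :
    edg a b ≤ ‖a - b‖ / d :=
  div_le_div_of_nonneg_left (norm_nonneg _) hd h

/-- the set of lengths of chains from `u` to `v` -/
def chains (u v : X) : Set ℝ :=
  {s | ∃ (n : ℕ) (w : ℕ → X), w 0 = u ∧ w n = v ∧
    s = ∑ i ∈ Finset.range n, edg (w i) (w (i+1))}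

/-- weighted (Cerami) distance -/
noncomputable def dd (u v : X) : ℝ := sInf (chains u v)

lemma edg_mem_chains (u v : X) : edg u v ∈ chains u v := by
  refine ⟨1, fun i => if i = 0 then u else v, by simp, by simp, by simp⟩

lemma chains_nonempty (u v : X) : (chains u v).Nonempty := ⟨_, edg_mem_chains u v⟩

lemma chains_nonneg {u v : X} {s : ℝ} (hs : s ∈ chains u v) : 0 ≤ s := by
  obtain ⟨n, w, -, -, rfl⟩ := hs
  exact Finset.sum_nonneg fun i _ => edg_nonneg _ _

lemma chains_bddBelow (u v : X) : BddBelow (chains u v) :=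
  ⟨0, fun s hs => chains_nonneg hs⟩

lemma dd_nonneg (u v : X) : 0 ≤ dd u v :=
  le_csInf (chains_nonempty u v) fun s hs => chains_nonneg hs

lemma dd_le_edg (u v : X) : dd u v ≤ edg u v :=
  csInf_le (chains_bddBelow u v) (edg_mem_chains u v)

lemma dd_le_norm (u v : X) : dd u v ≤ ‖u - v‖ :=
  (dd_le_edg u v).trans (edg_le_norm u v)

lemma dd_self (u : X) : dd u u = 0 :=
  le_antisymm (by simpa using dd_le_norm u u) (dd_nonneg u u)

lemma chains_comm_subset (u v : X) : chains u v ⊆ chains v u := by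
  rintro s ⟨n, w, h0, hn, rfl⟩
  refine ⟨n, fun i => w (n - i), by simp [hn], by simp [h0], ?_⟩
  rw [← Finset.sum_range_reflect (fun i => edg (w i) (w (i+1))) n]
  refine Finset.sum_congr rfl fun i hi => ?_
  have hi' := Finset.mem_range.1 hi
  show edg (w (n - 1 - i)) (w (n - 1 - i + 1)) = edg (w (n - i)) (w (n - (i + 1)))
  have h1 : n - i = (n - 1 - i) + 1 := by omega
  have h2 : n - (i + 1) = n - 1 - i := by omega
  rw [h1, h2, edg_comm]

lemma chains_comm (u v : X) : chains u v = chains v u :=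
  le_antisymm (chains_comm_subset u v) (chains_comm_subset v u)

lemma dd_comm (u v : X) : dd u v = dd v u := by unfold dd; rw [chains_comm]

lemma chains_concat {u m v : X} {s₁ s₂ : ℝ} (h₁ : s₁ ∈ chains u m)
    (h₂ : s₂ ∈ chains m v) : s₁ + s₂ ∈ chains u v := by
  obtain ⟨n, w, hw0, hwn, rfl⟩ := h₁
  obtain ⟨k, x, hx0, hxk, rfl⟩ := h₂
  set y : ℕ → X := fun i => if i < n then w i else x (i - n) with hy
  have hyw : ∀ i ≤ n, y i = w i := by
    intro i hi
    rcases lt_or_eq_of_le hi with h | h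
    · simp [hy, h]
    · subst h; simp [hy, hx0, hwn]
  have hyx : ∀ j, y (n + j) = x j := by
    intro j
    rcases Nat.eq_zero_or_pos j with rfl | hj
    · simpa using hyw n le_rfl |>.trans (hwn.trans hx0.symm)
    · simp [hy, Nat.not_lt.2 (Nat.le_add_right n j), Nat.add_sub_cancel_left]
  refine ⟨n + k, y, by simpa using hyw 0 (Nat.zero_le n) |>.trans hw0, by
    simpa using (hyx k).trans hxk, ?_⟩
  rw [Finset.sum_range_add]
  congr 1
  · refine Finset.sum_congr rfl fun i hi => ?_
    have hi' := Finset.mem_range.1 hi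
    rw [hyw i hi'.le, hyw (i+1) hi']
  · refine Finset.sum_congr rfl fun j _ => ?_
    have hj1 := hyx (j+1)
    rw [show n + (j+1) = n + j + 1 by omega] at hj1
    rw [hyx j, hj1]

lemma dd_triangle (u m v : X) : dd u v ≤ dd u m + dd m v := by
  refine le_of_forall_pos_le_add fun ε hε => ?_
  obtain ⟨s₁, hs₁, hlt₁⟩ := Real.lt_sInf_add_pos (chains_nonempty u m) (half_pos hε)
  obtain ⟨s₂, hs₂, hlt₂⟩ := Real.lt_sInf_add_pos (chains_nonempty m v) (half_pos hε)
  have := csInf_le (chains_bddBelow u v) (chains_concat hs₁ hs₂)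
  simp only [dd] at *
  linarith

lemma chain_growth (n : ℕ) (w : ℕ → X) :
    1 + ‖w 0‖ + ‖w 0 - w n‖ ≤
      (1 + ‖w 0‖) * Real.exp (∑ i ∈ Finset.range n, edg (w i) (w (i+1))) := by
  induction n with
  | zero => simp
  | succ n ih =>
    set S := ∑ i ∈ Finset.range n, edg (w i) (w (i+1)) with hS
    set c := ‖w 0‖
    set A := 1 + c + ‖w 0 - w n‖ with hA
    have hA1 : (1:ℝ) ≤ A := by
      have := norm_nonneg (w 0 - w n); have := norm_nonneg (w 0); simp only [hA, c]; linarith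
    set Δ := ‖w n - w (n+1)‖ with hΔ
    set E := edg (w n) (w (n+1)) with hE
    have hEA : Δ ≤ A * E := by
      have hden : (0:ℝ) < 1 + min ‖w n‖ ‖w (n+1)‖ := by
        have := min_norm_nonneg (w n) (w (n+1)); linarith
      have hminA : 1 + min ‖w n‖ ‖w (n+1)‖ ≤ A := by
        have h1 : min ‖w n‖ ‖w (n+1)‖ ≤ ‖w n‖ := min_le_left _ _
        have h2 : ‖w n‖ ≤ c + ‖w 0 - w n‖ := by
          simpa [c] using norm_sub_le (w 0) (w 0 - w n)
        simp only [hA]; linarith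
      calc Δ = (Δ / (1 + min ‖w n‖ ‖w (n+1)‖)) * (1 + min ‖w n‖ ‖w (n+1)‖) := by
              field_simp
        _ ≤ E * A := by
              refine mul_le_mul le_rfl hminA hden.le ?_
              exact edg_nonneg _ _
        _ = A * E := mul_comm _ _
    have hEnn : 0 ≤ E := edg_nonneg _ _
    have hexpS : A ≤ (1 + c) * Real.exp S := ih
    have hexpE : 1 + E ≤ Real.exp E := by linarith [Real.add_one_le_exp E]
    have htri : ‖w 0 - w (n+1)‖ ≤ ‖w 0 - w n‖ + Δ := by
      simpa [hΔ] using norm_sub_le_norm_sub_add_norm_sub (w 0) (w n) (w (n+1))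
    rw [Finset.sum_range_succ, ← hS, ← hE, Real.exp_add]
    have hpos : (0:ℝ) < 1 + c := by have : (0:ℝ) ≤ c := norm_nonneg _; linarith
    calc 1 + c + ‖w 0 - w (n+1)‖ ≤ A + Δ := by simp only [hA]; linarith
      _ ≤ A + A * E := by linarith
      _ = A * (1 + E) := by ring
      _ ≤ ((1 + c) * Real.exp S) * (1 + E) := by
          refine mul_le_mul_of_nonneg_right hexpS (by linarith)
      _ ≤ ((1 + c) * Real.exp S) * Real.exp E := by
          refine mul_le_mul_of_nonneg_left hexpE ?_
          positivity
      _ = (1 + c) * (Real.exp S * Real.exp E) := by ring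

lemma one_add_dist_le (u v : X) :
    1 + ‖u‖ + ‖u - v‖ ≤ (1 + ‖u‖) * Real.exp (dd u v) := by
  have hpos : (0:ℝ) < 1 + ‖u‖ := by have := norm_nonneg u; linarith
  have hratio : (0:ℝ) < (1 + ‖u‖ + ‖u - v‖) / (1 + ‖u‖) := by
    have := norm_nonneg (u - v); positivity
  have hlog : Real.log ((1 + ‖u‖ + ‖u - v‖) / (1 + ‖u‖)) ≤ dd u v := by
    refine le_csInf (chains_nonempty u v) fun s hs => ?_
    obtain ⟨n, w, h0, hn, rfl⟩ := hs
    have := chain_growth n w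
    rw [h0, hn] at this
    rw [Real.log_le_iff_le_exp hratio, div_le_iff₀ hpos]
    linarith [this]
  have := Real.exp_le_exp.2 hlog
  rw [Real.exp_log hratio] at this
  rw [div_le_iff₀ hpos] at this
  linarith [this]

lemma norm_sub_le_of_dd (u v : X) :
    ‖u - v‖ ≤ (1 + ‖u‖) * (Real.exp (dd u v) - 1) := by
  have := one_add_dist_le u v
  have h2 : (1 + ‖u‖) * (Real.exp (dd u v) - 1)
      = (1 + ‖u‖) * Real.exp (dd u v) - (1 + ‖u‖) := by ring
  linarith

lemma eq_of_dd_eq_zero {u v : X} (h : dd u v = 0) : u = v := by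
  have := norm_sub_le_of_dd u v
  rw [h] at this
  simp at this
  have : ‖u - v‖ ≤ 0 := by simpa using this
  rw [← sub_eq_zero]
  exact norm_le_zero_iff.1 this

lemma one_add_norm_le (u v : X) : 1 + ‖v‖ ≤ (1 + ‖u‖) * Real.exp (dd u v) := by
  have h1 := one_add_dist_le u v
  have h2 : ‖v‖ ≤ ‖u‖ + ‖u - v‖ := by
    simpa using norm_sub_le u (u - v)
  linarith


/-! ### Path space -/

variable {Y : Type*} [NormedAddCommGroup Y] [NormedSpace ℝ Y]

/-- sup of the weighted distance along two paths -/
noncomputable def pD (γ η : C(unitInterval, X)) : ℝ := ⨆ tv, dd (γ tv) (η tv)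

lemma dd_apply_le_dist (γ η : C(unitInterval, X)) (tv : unitInterval) :
    dd (γ tv) (η tv) ≤ dist γ η := by
  refine (dd_le_norm _ _).trans ?_
  rw [← dist_eq_norm]
  exact ContinuousMap.dist_apply_le_dist tv

lemma pD_bddAbove (γ η : C(unitInterval, X)) :
    BddAbove (Set.range fun tv => dd (γ tv) (η tv)) := by
  refine ⟨dist γ η, ?_⟩
  rintro x ⟨tv, rfl⟩
  exact dd_apply_le_dist γ η tv

lemma le_pD (γ η : C(unitInterval, X)) (tv : unitInterval) :
    dd (γ tv) (η tv) ≤ pD γ η :=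
  le_ciSup (pD_bddAbove γ η) tv

lemma pD_le (γ η : C(unitInterval, X)) {b : ℝ}
    (h : ∀ tv, dd (γ tv) (η tv) ≤ b) : pD γ η ≤ b :=
  ciSup_le h

lemma pD_le_dist (γ η : C(unitInterval, X)) : pD γ η ≤ dist γ η :=
  pD_le γ η (dd_apply_le_dist γ η)

lemma pD_nonneg (γ η : C(unitInterval, X)) : 0 ≤ pD γ η :=
  (dd_nonneg _ _).trans (le_pD γ η 0)

lemma pD_self (γ : C(unitInterval, X)) : pD γ γ = 0 := by
  have : ∀ tv : unitInterval, dd (γ tv) (γ tv) = 0 := fun tv => dd_self _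
  simp only [pD, this, ciSup_const]

lemma pD_triangle (γ η ζ : C(unitInterval, X)) : pD γ ζ ≤ pD γ η + pD η ζ :=
  pD_le _ _ fun tv => (dd_triangle _ (η tv) _).trans
    (add_le_add (le_pD γ η tv) (le_pD η ζ tv))

/-! ### The sup functional along a path -/

/-- `Phi J γ = sup J(γ(tv))` -/
noncomputable def Phi (J : X → ℝ) (γ : C(unitInterval, X)) : ℝ := ⨆ tv, J (γ tv)

lemma phi_spec {J : X → ℝ} (hJ : Continuous J) (γ : C(unitInterval, X)) :
    ∃ tv, Phi J γ = J (γ tv) ∧ ∀ tw, J (γ tw) ≤ Phi J γ := by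
  obtain ⟨tv, -, htv⟩ := isCompact_univ.exists_isMaxOn ⟨0, trivial⟩
    ((hJ.comp γ.continuous).continuousOn)
  have htv' : ∀ tw : unitInterval, J (γ tw) ≤ J (γ tv) := fun tw => htv (Set.mem_univ tw)
  have hb : BddAbove (Set.range fun tw => J (γ tw)) := by
    refine ⟨J (γ tv), ?_⟩
    rintro x ⟨tw, rfl⟩
    exact htv' tw
  have h1 : Phi J γ = J (γ tv) :=
    le_antisymm (ciSup_le fun tw => htv' tw) (le_ciSup hb tv)
  exact ⟨tv, h1, fun tw => le_ciSup hb tw⟩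

lemma le_phi {J : X → ℝ} (hJ : Continuous J) (γ : C(unitInterval, X))
    (tv : unitInterval) : J (γ tv) ≤ Phi J γ :=
  (phi_spec hJ γ).choose_spec.2 tv

lemma phi_le {J : X → ℝ} (γ : C(unitInterval, X)) {b : ℝ}
    (h : ∀ tv, J (γ tv) ≤ b) : Phi J γ ≤ b :=
  ciSup_le h


/-! ### Ekeland's variational principle on the path space -/

lemma ekeland [CompleteSpace X] {J : X → ℝ} (hJc : Continuous J) {e : X} {b ε : ℝ}
    (hlb : ∀ γ : C(unitInterval, X), γ 0 = 0 → γ 1 = e → b ≤ Phi J γ)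
    (hε : 0 < ε) (γ₀ : C(unitInterval, X)) (h00 : γ₀ 0 = 0) (h01 : γ₀ 1 = e) :
    ∃ γ : C(unitInterval, X), γ 0 = 0 ∧ γ 1 = e ∧ Phi J γ ≤ Phi J γ₀ ∧
      ∀ η : C(unitInterval, X), η 0 = 0 → η 1 = e →
        Phi J γ ≤ Phi J η + ε * pD γ η := by
  classical
  have main : ∃ s : ℕ → C(unitInterval, X), s 0 = γ₀ ∧
      (∀ k, (s k) 0 = 0 ∧ (s k) 1 = e) ∧
      (∀ k, Phi J (s (k+1)) + ε * pD (s k) (s (k+1)) ≤ Phi J (s k)) ∧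
      (∀ (k : ℕ) (ζ : C(unitInterval, X)), ζ 0 = 0 → ζ 1 = e →
        Phi J ζ + ε * pD (s k) ζ ≤ Phi J (s k) →
        Phi J (s (k+1)) ≤ Phi J ζ + (1/2)^k) := by
    have key : ∀ (k : ℕ) (p : {γ : C(unitInterval, X) // γ 0 = 0 ∧ γ 1 = e}),
        ∃ q : {γ : C(unitInterval, X) // γ 0 = 0 ∧ γ 1 = e},
        (Phi J q.1 + ε * pD p.1 q.1 ≤ Phi J p.1) ∧
        ∀ ζ : {γ : C(unitInterval, X) // γ 0 = 0 ∧ γ 1 = e},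
          Phi J ζ.1 + ε * pD p.1 ζ.1 ≤ Phi J p.1 →
          Phi J q.1 ≤ Phi J ζ.1 + (1/2)^k := by
      intro k p
      set V : Set ℝ := {x | ∃ ζ : {γ : C(unitInterval, X) // γ 0 = 0 ∧ γ 1 = e},
        (Phi J ζ.1 + ε * pD p.1 ζ.1 ≤ Phi J p.1) ∧ x = Phi J ζ.1} with hV
      have hVne : V.Nonempty := ⟨Phi J p.1, p, by rw [pD_self]; ring_nf; exact le_rfl, rfl⟩
      have hVbdd : BddBelow V := by
        refine ⟨b, ?_⟩
        rintro x ⟨ζ, -, rfl⟩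
        exact hlb ζ.1 ζ.2.1 ζ.2.2
      obtain ⟨x, hxV, hxlt⟩ := Real.lt_sInf_add_pos hVne
        (show (0:ℝ) < (1/2)^k by positivity)
      obtain ⟨q, hq1, rfl⟩ := hxV
      refine ⟨q, hq1, fun ζ hζ => ?_⟩
      have : sInf V ≤ Phi J ζ.1 := csInf_le hVbdd ⟨ζ, hζ, rfl⟩
      linarith
    choose f hf1 hf2 using key
    refine ⟨fun n => (Nat.rec ⟨γ₀, h00, h01⟩ (fun k p => f k p) n :
      {γ : C(unitInterval, X) // γ 0 = 0 ∧ γ 1 = e}).1, rfl,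
      fun k => ⟨(Nat.rec ⟨γ₀, h00, h01⟩ (fun k p => f k p) k :
        {γ : C(unitInterval, X) // γ 0 = 0 ∧ γ 1 = e}).2.1,
        (Nat.rec ⟨γ₀, h00, h01⟩ (fun k p => f k p) k :
        {γ : C(unitInterval, X) // γ 0 = 0 ∧ γ 1 = e}).2.2⟩,
      fun k => hf1 k _, fun k ζ hζ0 hζ1 hζ => hf2 k _ ⟨ζ, hζ0, hζ1⟩ hζ⟩
  obtain ⟨s, hs0, hG, h1, h2⟩ := main
  set Φ : ℕ → ℝ := fun k => Phi J (s k) with hΦ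
  have anti : Antitone Φ := by
    refine antitone_nat_of_succ_le fun k => ?_
    have := h1 k
    have hpd := pD_nonneg (s k) (s (k+1))
    simp only [hΦ]
    nlinarith
  have lbd : ∀ k, b ≤ Φ k := fun k => hlb (s k) (hG k).1 (hG k).2
  set L : ℝ := ⨅ k, Φ k with hL
  have hbddΦ : BddBelow (Set.range Φ) := ⟨b, by rintro x ⟨k, rfl⟩; exact lbd k⟩
  have hLten : Tendsto Φ atTop (𝓝 L) := tendsto_atTop_ciInf anti hbddΦ
  have hLle : ∀ k, L ≤ Φ k := fun k => ciInf_le hbddΦ k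
  have hstep : ∀ k, ε * pD (s k) (s (k+1)) ≤ Φ k - Φ (k+1) := fun k => by
    have := h1 k; simp only [hΦ]; linarith
  have chainb : ∀ k d, ε * pD (s k) (s (k+d)) ≤ Φ k - Φ (k+d) := by
    intro k d
    induction d with
    | zero => simp [pD_self]
    | succ d ih =>
      have htr := pD_triangle (s k) (s (k+d)) (s (k+d+1))
      have h2' := hstep (k+d)
      have hmm : ε * pD (s k) (s (k + d + 1)) ≤
          ε * pD (s k) (s (k+d)) + ε * pD (s (k+d)) (s (k+d+1)) := by
        rw [← mul_add]
        exact mul_le_mul_of_nonneg_left htr hε.le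
      have hkd1 : k + (d+1) = k + d + 1 := by omega
      rw [hkd1]
      linarith
  have pDkm : ∀ k m, k ≤ m → ε * pD (s k) (s m) ≤ Φ k - L := by
    intro k m hkm
    obtain ⟨d, rfl⟩ := Nat.exists_eq_add_of_le hkm
    have := chainb k d
    have := hLle (k + d)
    linarith
  -- uniform norm bound
  obtain ⟨tvR, -, htvR⟩ := isCompact_univ.exists_isMaxOn (Set.univ_nonempty)
    ((continuous_norm.comp (s 0).continuous).continuousOn)
  have hR₀' : ∀ tv, ‖s 0 tv‖ ≤ ‖s 0 tvR‖ := fun tv => htvR (Set.mem_univ tv)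
  set R₀ : ℝ := ‖s 0 tvR‖ with hR₀
  set R : ℝ := (1 + R₀) * Real.exp ((Φ 0 - L)/ε) with hR
  have hRpos : 0 < R := by
    have : (0:ℝ) ≤ R₀ := norm_nonneg _
    positivity
  have hnormb : ∀ k tv, 1 + ‖s k tv‖ ≤ R := by
    intro k tv
    have hb1 : 1 + ‖s k tv‖ ≤ (1 + ‖s 0 tv‖) * Real.exp (dd (s 0 tv) (s k tv)) :=
      one_add_norm_le _ _
    have hb2 : dd (s 0 tv) (s k tv) ≤ (Φ 0 - L)/ε := by
      have := pDkm 0 k (Nat.zero_le k)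
      have := le_pD (s 0) (s k) tv
      rw [le_div_iff₀ hε]
      nlinarith
    have hb3 : (1 + ‖s 0 tv‖) * Real.exp (dd (s 0 tv) (s k tv)) ≤ R := by
      rw [hR]
      have hnn : (0:ℝ) < 1 + ‖s 0 tv‖ := by have := norm_nonneg (s 0 tv); linarith
      refine mul_le_mul ?_ (Real.exp_le_exp.2 hb2) (Real.exp_pos _).le ?_
      · have := hR₀' tv; linarith
      · have : (0:ℝ) ≤ R₀ := norm_nonneg _; linarith
    exact hb1.trans hb3
  -- Cauchy in the sup norm
  set bnd : ℕ → ℝ := fun N => R * (Real.exp ((Φ N - L)/ε) - 1) with hbnd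
  have hexp1 : ∀ N, (1:ℝ) ≤ Real.exp ((Φ N - L)/ε) := by
    intro N
    rw [Real.one_le_exp_iff]
    exact div_nonneg (by linarith [hLle N]) hε.le
  have hbnd0 : ∀ N, 0 ≤ bnd N := by
    intro N
    simp only [hbnd]
    nlinarith [hexp1 N]
  have hdistb : ∀ N n m, N ≤ n → N ≤ m → dist (s n) (s m) ≤ bnd N := by
    have main' : ∀ N n m, N ≤ n → n ≤ m → dist (s n) (s m) ≤ bnd N := by
      intro N n m hNn hnm
      rw [ContinuousMap.dist_le (hbnd0 N)]
      intro tv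
      have hb1 : dist (s n tv) (s m tv) ≤ (1 + ‖s n tv‖) *
          (Real.exp (dd (s n tv) (s m tv)) - 1) := by
        rw [dist_eq_norm]
        exact norm_sub_le_of_dd _ _
      have hpd : dd (s n tv) (s m tv) ≤ (Φ N - L)/ε := by
        have hp1 := le_pD (s n) (s m) tv
        have hp2 := pDkm n m hnm
        have hp3 : Φ n ≤ Φ N := anti hNn
        rw [le_div_iff₀ hε]
        nlinarith
      have hexp : Real.exp (dd (s n tv) (s m tv)) - 1 ≤
          Real.exp ((Φ N - L)/ε) - 1 := by
        have := Real.exp_le_exp.2 hpd; linarith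
      have hexnn : 0 ≤ Real.exp (dd (s n tv) (s m tv)) - 1 := by
        have : (1:ℝ) ≤ Real.exp (dd (s n tv) (s m tv)) := by
          rw [Real.one_le_exp_iff]; exact dd_nonneg _ _
        linarith
      have hnrm := hnormb n tv
      have hnn : (0:ℝ) < 1 + ‖s n tv‖ := by have := norm_nonneg (s n tv); linarith
      have : dist (s n tv) (s m tv) ≤ R * (Real.exp ((Φ N - L)/ε) - 1) := by
        nlinarith
      simpa [hbnd] using this
    intro N n m hNn hNm
    rcases le_total n m with h | h
    · exact main' N n m hNn h
    · rw [dist_comm]; exact main' N m n hNm h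
  have htenΦL : Tendsto (fun N => (Φ N - L)/ε) atTop (𝓝 0) := by
    have h' := (hLten.sub_const L).div_const ε
    rw [sub_self, zero_div] at h'
    exact h'
  have hbndten : Tendsto bnd atTop (𝓝 0) := by
    have h2' : Tendsto (fun N => Real.exp ((Φ N - L)/ε)) atTop (𝓝 1) := by
      have h'' := (Real.continuous_exp.tendsto 0).comp htenΦL
      rw [Real.exp_zero] at h''
      exact h''
    have h3' : Tendsto bnd atTop (𝓝 (R * (1 - 1))) :=
      (h2'.sub_const 1).const_mul R
    rw [sub_self, mul_zero] at h3'
    exact h3'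
  have hcauchy : CauchySeq s := cauchySeq_of_le_tendsto_0 bnd
    (fun n m N hn hm => hdistb N n m hn hm) hbndten
  obtain ⟨γs, hγs⟩ := cauchySeq_tendsto_of_complete hcauchy
  have heval : ∀ tv : unitInterval, Tendsto (fun k => s k tv) atTop (𝓝 (γs tv)) := by
    intro tv
    exact ((continuous_eval_const tv).tendsto γs).comp hγs
  have hγs0 : γs 0 = 0 := by
    have h0' : Tendsto (fun k => s k 0) atTop (𝓝 (0:X)) := by
      have heq : (fun k => s k 0) = fun _ => (0:X) := funext fun k => (hG k).1
      rw [heq]; exact tendsto_const_nhds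
    exact tendsto_nhds_unique (heval 0) h0'
  have hγs1 : γs 1 = e := by
    have h0' : Tendsto (fun k => s k 1) atTop (𝓝 e) := by
      have heq : (fun k => s k 1) = fun _ => e := funext fun k => (hG k).2
      rw [heq]; exact tendsto_const_nhds
    exact tendsto_nhds_unique (heval 1) h0'
  have hdten : Tendsto (fun m => dist (s m) γs) atTop (𝓝 0) := by
    have h' := hγs.dist (tendsto_const_nhds (x := γs))
    rw [dist_self] at h'
    exact h'
  have hpDlim : ∀ k, ε * pD (s k) γs ≤ Φ k - L := by
    intro k
    have hbd : ∀ᶠ m in atTop, ε * pD (s k) γs ≤ (Φ k - L) + ε * dist (s m) γs := by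
      filter_upwards [eventually_ge_atTop k] with m hm
      have ht := pD_triangle (s k) (s m) γs
      have h4 := pD_le_dist (s m) γs
      have h5 := pDkm k m hm
      nlinarith
    have hten : Tendsto (fun m => (Φ k - L) + ε * dist (s m) γs) atTop
        (𝓝 ((Φ k - L) + ε * 0)) := tendsto_const_nhds.add (hdten.const_mul ε)
    rw [mul_zero, add_zero] at hten
    exact ge_of_tendsto hten hbd
  have hΦγs : Phi J γs ≤ L := by
    obtain ⟨tv₀, heq, -⟩ := phi_spec hJc γs
    rw [heq]
    have hJten : Tendsto (fun k => J (s k tv₀)) atTop (𝓝 (J (γs tv₀))) :=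
      (hJc.tendsto _).comp (heval tv₀)
    refine le_of_tendsto_of_tendsto hJten hLten ?_
    filter_upwards with k
    exact le_phi hJc (s k) tv₀
  refine ⟨γs, hγs0, hγs1, by rw [← hs0]; exact hΦγs.trans (hLle 0), ?_⟩
  intro η hη0 hη1
  by_contra hcon
  push_neg at hcon
  have hmem : ∀ k, Phi J η + ε * pD (s k) η ≤ Φ k := by
    intro k
    have ht := pD_triangle (s k) γs η
    have h5 := hpDlim k
    have h6 : ε * pD (s k) η ≤ ε * (pD (s k) γs + pD γs η) :=
      mul_le_mul_of_nonneg_left ht hε.le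
    have h7 : ε * (pD (s k) γs + pD γs η) = ε * pD (s k) γs + ε * pD γs η := by ring
    linarith [hcon, hΦγs]
  have hηup : ∀ k, Φ (k+1) ≤ Phi J η + (1/2)^k := fun k =>
    h2 k η hη0 hη1 (hmem k)
  have hLη : L ≤ Phi J η := by
    refine le_of_forall_pos_le_add fun δ hδ => ?_
    obtain ⟨k, hk⟩ := exists_pow_lt_of_lt_one hδ (by norm_num : (1:ℝ)/2 < 1)
    have := hLle (k+1)
    have := hηup k
    linarith
  have hpDη : Tendsto (fun k => pD (s k) η) atTop (𝓝 0) := by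
    have hub : ∀ k, pD (s k) η ≤ (Φ k - L)/ε := by
      intro k
      rw [le_div_iff₀ hε]
      have := hmem k
      linarith [hLη]
    refine tendsto_of_tendsto_of_tendsto_of_le_of_le tendsto_const_nhds htenΦL
      (fun k => pD_nonneg _ _) hub
  have hηγs : η = γs := by
    ext tv
    have hdd : dd (γs tv) (η tv) = 0 := by
      have hub : ∀ k, dd (γs tv) (η tv) ≤ dist (s k) γs + pD (s k) η := by
        intro k
        have ht := dd_triangle (γs tv) (s k tv) (η tv)
        have h4 : dd (γs tv) (s k tv) ≤ dist (s k) γs := by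
          refine (dd_le_norm _ _).trans ?_
          rw [← dist_eq_norm, dist_comm]
          exact ContinuousMap.dist_apply_le_dist tv
        have h5 := le_pD (s k) η tv
        linarith
      have hten : Tendsto (fun k => dist (s k) γs + pD (s k) η) atTop (𝓝 (0 + 0)) :=
        hdten.add hpDη
      rw [add_zero] at hten
      have hle : dd (γs tv) (η tv) ≤ 0 := ge_of_tendsto hten
        (Filter.Eventually.of_forall hub)
      exact le_antisymm hle (dd_nonneg _ _)
    exact (eq_of_dd_eq_zero hdd).symm
  rw [hηγs, pD_self] at hcon
  linarith [hcon]


/-! ### A norm-attainment helper -/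

lemma exists_apply_gt {f : X →L[ℝ] ℝ} {c : ℝ} (hc : 0 ≤ c) (h : c < ‖f‖) :
    ∃ v : X, ‖v‖ ≤ 1 ∧ c < f v := by
  by_contra hcon
  push_neg at hcon
  have hle : ‖f‖ ≤ c := by
    refine ContinuousLinearMap.opNorm_le_bound f hc fun x => ?_
    rcases eq_or_ne x 0 with rfl | hx
    · simp
    · have hxn : 0 < ‖x‖ := norm_pos_iff.2 hx
      have hunit : ‖‖x‖⁻¹ • x‖ ≤ 1 := by
        rw [norm_smul, Real.norm_eq_abs, abs_inv, abs_norm,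
          inv_mul_cancel₀ hxn.ne']
      have h1 := hcon (‖x‖⁻¹ • x) hunit
      have h2 := hcon (-(‖x‖⁻¹ • x)) (by rwa [norm_neg])
      rw [map_smul] at h1
      rw [map_neg, map_smul] at h2
      simp only [smul_eq_mul] at h1 h2
      have hfx1 : f x ≤ c * ‖x‖ := by
        have h3 := mul_le_mul_of_nonneg_left h1 hxn.le
        calc f x = ‖x‖ * (‖x‖⁻¹ * f x) := by field_simp
          _ ≤ ‖x‖ * c := h3
          _ = c * ‖x‖ := mul_comm _ _
      have hfx2 : -(f x) ≤ c * ‖x‖ := by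
        have := mul_le_mul_of_nonneg_left h2 hxn.le
        calc -(f x) = ‖x‖ * (-(‖x‖⁻¹ * f x)) := by field_simp
          _ ≤ ‖x‖ * c := this
          _ = c * ‖x‖ := mul_comm _ _
      rw [Real.norm_eq_abs, abs_le]
      constructor <;> linarith
  linarith

/-! ### The deformation/perturbation lemma -/

set_option maxHeartbeats 2000000 in
lemma perturb [CompleteSpace X] {J : X → ℝ} (hJ : ContDiff ℝ 1 J) {e : X} {ε κ : ℝ}
    (hε : 0 < ε) (hκ : 0 < κ)
    (γ : C(unitInterval, X)) (hγ0 : γ 0 = 0) (hγ1 : γ 1 = e)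
    (hend0 : J (γ 0) < Phi J γ - κ) (hend1 : J (γ 1) < Phi J γ - κ)
    (hek : ∀ η : C(unitInterval, X), η 0 = 0 → η 1 = e →
      Phi J γ ≤ Phi J η + ε * pD γ η) :
    ∃ tv : unitInterval, Phi J γ - κ/2 ≤ J (γ tv) ∧
      ‖fderiv ℝ J (γ tv)‖ * (1 + ‖γ tv‖) ≤ 5*ε := by
  classical
  by_contra hcon
  push_neg at hcon
  have hJc : Continuous J := hJ.continuous
  have hJd : Differentiable ℝ J := hJ.differentiable one_ne_zero
  have hdJc : Continuous (fderiv ℝ J) := hJ.continuous_fderiv one_ne_zero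
  set G : unitInterval → (X →L[ℝ] ℝ) := fun tv => fderiv ℝ J (γ tv) with hG
  have hGc : Continuous G := hdJc.comp γ.continuous
  set A : Set unitInterval := {tv | Phi J γ - κ/2 ≤ J (γ tv)} with hA
  have hAclosed : IsClosed A := isClosed_le continuous_const (hJc.comp γ.continuous)
  have hAcompact : IsCompact A := hAclosed.isCompact
  obtain ⟨tvM, htvM, -⟩ := phi_spec hJc γ
  have hAne : A.Nonempty := ⟨tvM, by rw [hA]; simp only [Set.mem_setOf_eq, ← htvM]; linarith⟩
  -- for each point of A pick a direction and an open neighbourhood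
  have hloc : ∀ tv ∈ A, ∃ U : Set unitInterval, IsOpen U ∧ tv ∈ U ∧ ∃ v : X,
      ‖v‖ ≤ 1 ∧ ∀ tw ∈ U, (5*ε < G tw v * (1 + ‖γ tw‖) ∧ Phi J γ - κ < J (γ tw)) := by
    intro tv htv
    have h5 : 5*ε < ‖G tv‖ * (1 + ‖γ tv‖) := hcon tv htv
    have hpos : (0:ℝ) < 1 + ‖γ tv‖ := by have := norm_nonneg (γ tv); linarith
    have h5' : 5*ε / (1 + ‖γ tv‖) < ‖G tv‖ := by
      rw [div_lt_iff₀ hpos]; linarith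
    obtain ⟨v, hv1, hv2⟩ := exists_apply_gt (div_nonneg (by positivity) hpos.le) h5'
    rw [div_lt_iff₀ hpos] at hv2
    set U : Set unitInterval :=
      {tw | 5*ε < G tw v * (1 + ‖γ tw‖) ∧ Phi J γ - κ < J (γ tw)} with hU
    have hUopen : IsOpen U := by
      refine IsOpen.inter ?_ ?_
      · exact isOpen_lt continuous_const ((hGc.clm_apply continuous_const).mul
          (continuous_const.add (continuous_norm.comp γ.continuous)))
      · exact isOpen_lt continuous_const (hJc.comp γ.continuous)
    refine ⟨U, hUopen, ⟨hv2, by rw [hA] at htv; simp only [Set.mem_setOf_eq] at htv; linarith⟩,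
      v, hv1, fun tw htw => htw⟩
  choose U hUopen hUmem vv hvnorm hvprop using hloc
  -- finite subcover
  have hcover : A ⊆ ⋃ i : A, U i i.2 := by
    intro tv htv
    exact Set.mem_iUnion.2 ⟨⟨tv, htv⟩, hUmem tv htv⟩
  obtain ⟨t, ht⟩ := hAcompact.elim_finite_subcover (fun i : A => U i i.2)
    (fun i => hUopen i i.2) hcover
  -- the excluded endpoints
  have hendU : ∀ (i : A), (0 : unitInterval) ∉ U i i.2 ∧ (1 : unitInterval) ∉ U i i.2 := by
    intro i
    constructor
    · intro hmem
      have := (hvprop i i.2 0 hmem).2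
      linarith
    · intro hmem
      have := (hvprop i i.2 1 hmem).2
      linarith
  -- partition of unity from distance functions
  set U₀ : Set unitInterval := {tw | J (γ tw) < Phi J γ - κ/2} with hU₀
  have hU₀open : IsOpen U₀ := isOpen_lt (hJc.comp γ.continuous) continuous_const
  set f₀ : unitInterval → ℝ := fun tw => Metric.infDist tw U₀ᶜ with hf₀
  set fi : A → unitInterval → ℝ := fun i tw => Metric.infDist tw (U i i.2)ᶜ with hfi
  set F : unitInterval → ℝ := fun tw => f₀ tw + ∑ i ∈ t, fi i tw with hF
  have hf₀c : Continuous f₀ := Metric.continuous_infDist_pt _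
  have hfic : ∀ i, Continuous (fi i) := fun i => Metric.continuous_infDist_pt _
  have hFc : Continuous F := by
    refine hf₀c.add ?_
    exact continuous_finset_sum t fun i _ => hfic i
  have hf₀nn : ∀ tw, 0 ≤ f₀ tw := fun tw => Metric.infDist_nonneg
  have hfinn : ∀ i tw, 0 ≤ fi i tw := fun i tw => Metric.infDist_nonneg
  have hposmem : ∀ (V : Set unitInterval), IsOpen V → Vᶜ.Nonempty →
      ∀ tw ∈ V, 0 < Metric.infDist tw Vᶜ := by
    intro V hV hVc tw htw
    exact (hV.isClosed_compl.notMem_iff_infDist_pos hVc).1 (by simpa using htw)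
  have hU₀compl : U₀ᶜ.Nonempty := by
    refine ⟨tvM, ?_⟩
    simp only [hU₀, Set.mem_compl_iff, Set.mem_setOf_eq, not_lt, ← htvM]
    linarith
  have hUicompl : ∀ i : A, (U i i.2)ᶜ.Nonempty := fun i =>
    ⟨0, (hendU i).1⟩
  have hFpos : ∀ tw, 0 < F tw := by
    intro tw
    by_cases htw : tw ∈ U₀
    · have h0 : 0 < f₀ tw := hposmem U₀ hU₀open hU₀compl tw htw
      have : 0 ≤ ∑ i ∈ t, fi i tw := Finset.sum_nonneg fun i _ => hfinn i tw
      rw [hF]; dsimp only; linarith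
    · have htwA : tw ∈ A := by
        rw [hU₀] at htw
        simp only [Set.mem_setOf_eq, not_lt] at htw
        rw [hA]; exact htw
      obtain ⟨i, hi, htwU⟩ := Set.mem_iUnion₂.1 (ht htwA)
      have hipos : 0 < fi i tw := hposmem _ (hUopen i i.2) (hUicompl i) tw htwU
      have hsum : fi i tw ≤ ∑ j ∈ t, fi j tw :=
        Finset.single_le_sum (fun j _ => hfinn j tw) hi
      have := hf₀nn tw
      rw [hF]; dsimp only; linarith
  -- the vector field
  set w : unitInterval → X :=
    fun tw => (1 + ‖γ tw‖) • (F tw)⁻¹ • ∑ i ∈ t, fi i tw • vv i i.2 with hw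
  have hwc : Continuous w := by
    refine (continuous_const.add (continuous_norm.comp γ.continuous)).smul ?_
    refine (hFc.inv₀ fun tw => (hFpos tw).ne').smul ?_
    exact continuous_finset_sum t fun i _ => (hfic i).smul continuous_const
  have hwnorm : ∀ tw, ‖w tw‖ ≤ 1 + ‖γ tw‖ := by
    intro tw
    have hnγ : (0:ℝ) ≤ 1 + ‖γ tw‖ := by positivity
    have hsum : ‖∑ i ∈ t, fi i tw • vv i i.2‖ ≤ F tw := by
      refine (norm_sum_le _ _).trans ?_
      have h1 : ∀ i ∈ t, ‖fi i tw • vv i i.2‖ ≤ fi i tw := by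
        intro i _
        rw [norm_smul, Real.norm_eq_abs, abs_of_nonneg (hfinn i tw)]
        exact mul_le_of_le_one_right (hfinn i tw) (hvnorm i i.2)
      refine (Finset.sum_le_sum h1).trans ?_
      rw [hF]; dsimp only
      linarith [hf₀nn tw]
    calc ‖w tw‖ = (1 + ‖γ tw‖) * ((F tw)⁻¹ * ‖∑ i ∈ t, fi i tw • vv i i.2‖) := by
          rw [hw]; dsimp only
          rw [norm_smul, norm_smul, Real.norm_eq_abs, Real.norm_eq_abs,
            abs_of_nonneg hnγ, abs_of_nonneg (inv_nonneg.2 (hFpos tw).le)]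
      _ ≤ (1 + ‖γ tw‖) * ((F tw)⁻¹ * F tw) := by
          refine mul_le_mul_of_nonneg_left ?_ hnγ
          exact mul_le_mul_of_nonneg_left hsum (inv_nonneg.2 (hFpos tw).le)
      _ = 1 + ‖γ tw‖ := by rw [inv_mul_cancel₀ (hFpos tw).ne', mul_one]
  have hfi_zero : ∀ (i : A) (tw : unitInterval), tw ∉ U i i.2 → fi i tw = 0 := by
    intro i tw htw
    exact Metric.infDist_zero_of_mem (by simpa using htw)
  have hw0 : w 0 = 0 := by
    rw [hw]; dsimp only
    have hz : ∀ i ∈ t, fi i 0 • vv i i.2 = (0:X) := fun i _ => by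
      rw [hfi_zero i 0 (hendU i).1, zero_smul]
    rw [Finset.sum_congr rfl hz]
    simp
  have hw1 : w 1 = 0 := by
    rw [hw]; dsimp only
    have hz : ∀ i ∈ t, fi i 1 • vv i i.2 = (0:X) := fun i _ => by
      rw [hfi_zero i 1 (hendU i).2, zero_smul]
    rw [Finset.sum_congr rfl hz]
    simp
  have hwA : ∀ tw ∈ A, 5*ε ≤ G tw (w tw) := by
    intro tw htw
    have hf₀z : f₀ tw = 0 := by
      refine Metric.infDist_zero_of_mem ?_
      simp only [hU₀, Set.mem_compl_iff, Set.mem_setOf_eq, not_lt]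
      rw [hA] at htw; exact htw
    have hFsum : F tw = ∑ i ∈ t, fi i tw := by rw [hF]; dsimp only; rw [hf₀z, zero_add]
    have hcomp : G tw (w tw) =
        (1 + ‖γ tw‖) * ((F tw)⁻¹ * ∑ i ∈ t, fi i tw * G tw (vv i i.2)) := by
      rw [hw]; dsimp only
      rw [map_smul, map_smul, map_sum]
      simp only [map_smul, smul_eq_mul]
    have hterm : ∀ i ∈ t, 5*ε * fi i tw ≤ (1 + ‖γ tw‖) * (fi i tw * G tw (vv i i.2)) := by
      intro i hi
      rcases eq_or_lt_of_le (hfinn i tw) with h | h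
      · rw [← h]; simp
      · have htwU : tw ∈ U i i.2 := by
          by_contra hnot
          rw [hfi_zero i tw hnot] at h
          exact lt_irrefl _ h
        have h5' := (hvprop i i.2 tw htwU).1
        nlinarith [h.le]
    have hsumineq : 5*ε * F tw ≤ (1 + ‖γ tw‖) * ∑ i ∈ t, fi i tw * G tw (vv i i.2) := by
      rw [hFsum, Finset.mul_sum, Finset.mul_sum]
      exact Finset.sum_le_sum hterm
    have hFinv := hFpos tw
    rw [hcomp]
    calc 5*ε = (5*ε * F tw) * (F tw)⁻¹ := by field_simp
      _ ≤ ((1 + ‖γ tw‖) * ∑ i ∈ t, fi i tw * G tw (vv i i.2)) * (F tw)⁻¹ :=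
          mul_le_mul_of_nonneg_right hsumineq (inv_nonneg.2 hFinv.le)
      _ = (1 + ‖γ tw‖) * ((F tw)⁻¹ * ∑ i ∈ t, fi i tw * G tw (vv i i.2)) := by ring
  -- the function along deformations, and a uniform tube bound
  set g : unitInterval × ℝ → ℝ :=
    fun p => (fderiv ℝ J (γ p.1 - p.2 • w p.1)) (w p.1) with hg
  have hgc : Continuous g := by
    have h1 : Continuous fun p : unitInterval × ℝ => γ p.1 - p.2 • w p.1 :=
      (γ.continuous.comp continuous_fst).sub (continuous_snd.smul (hwc.comp continuous_fst))
    exact (hdJc.comp h1).clm_apply (hwc.comp continuous_fst)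
  have hg0 : ∀ tv ∈ A, 4*ε < g (tv, 0) := by
    intro tv htv
    have heq : g (tv, 0) = G tv (w tv) := by
      rw [hg]; dsimp only
      rw [zero_smul, sub_zero]
    rw [heq]
    linarith [hwA tv htv]
  obtain ⟨t₁, ht₁pos, ht₁le, ht₁⟩ : ∃ t₁ : ℝ, 0 < t₁ ∧ t₁ ≤ 1/2 ∧
      ∀ tv ∈ A, ∀ s' ∈ Set.Icc (0:ℝ) t₁, 4*ε < g (tv, s') := by
    set K := (A ×ˢ Set.Icc (0:ℝ) 1) ∩ {p | g p ≤ 4*ε} with hK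
    have hKc : IsCompact K := (hAcompact.prod isCompact_Icc).inter_right
      (isClosed_le hgc continuous_const)
    by_cases hKne : K.Nonempty
    · obtain ⟨p₀, hp₀K, hp₀min⟩ := hKc.exists_isMinOn hKne continuous_snd.continuousOn
      have hp₀pos : 0 < p₀.2 := by
        obtain ⟨⟨h1, h2⟩, h3⟩ := hp₀K
        rcases lt_or_eq_of_le h2.1 with h | h
        · exact h
        · exfalso
          have h4 := hg0 p₀.1 h1
          have hgp : g (p₀.1, p₀.2) ≤ 4*ε := by simpa using h3
          rw [← h] at hgp
          linarith
      refine ⟨min (p₀.2/2) (1/2), by positivity, min_le_right _ _, ?_⟩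
      intro tv htv s' hs'
      by_contra hns
      push_neg at hns
      have hmemK : (tv, s') ∈ K := by
        refine ⟨⟨htv, hs'.1, ?_⟩, hns⟩
        exact hs'.2.trans ((min_le_right _ _).trans (by norm_num))
      have hmin := hp₀min hmemK
      have h2 := hs'.2
      have h3 := min_le_left (p₀.2/2) (1/2)
      simp only [Set.mem_setOf_eq] at hmin
      have : p₀.2 ≤ s' := hmin
      linarith
    · refine ⟨1/2, by norm_num, le_rfl, ?_⟩
      intro tv htv s' hs'
      by_contra hns
      push_neg at hns
      exact hKne ⟨(tv, s'), ⟨⟨htv, hs'.1, hs'.2.trans (by norm_num)⟩, hns⟩⟩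
  obtain ⟨C, hC⟩ := (isCompact_univ.prod (isCompact_Icc (a := (0:ℝ)) (b := 1))
    ).exists_bound_of_continuousOn hgc.continuousOn
  have hC' : ∀ (tv : unitInterval) (s' : ℝ), s' ∈ Set.Icc (0:ℝ) 1 → |g (tv, s')| ≤ C := by
    intro tv s' hs'
    have := hC (tv, s') ⟨Set.mem_univ _, hs'⟩
    rwa [Real.norm_eq_abs] at this
  have hC0 : 0 ≤ C := le_trans (abs_nonneg _) (hC' 0 0 (by norm_num))
  set tt : ℝ := min t₁ (κ/(2*(C+4*ε+1))) with htt
  have httpos : 0 < tt := lt_min ht₁pos (by positivity)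
  have htt1 : tt ≤ 1/2 := (min_le_left _ _).trans ht₁le
  have httκ : tt * (C + 4*ε) ≤ κ/2 := by
    have h1 : tt ≤ κ/(2*(C+4*ε+1)) := min_le_right _ _
    calc tt * (C+4*ε) ≤ (κ/(2*(C+4*ε+1))) * (C+4*ε) :=
          mul_le_mul_of_nonneg_right h1 (by positivity)
      _ ≤ κ/2 := by
          rw [div_mul_eq_mul_div, div_le_div_iff₀ (by positivity) (by norm_num)]
          nlinarith
  set η : C(unitInterval, X) :=
    ⟨fun tw => γ tw - tt • w tw, γ.continuous.sub (continuous_const.smul hwc)⟩ with hη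
  have hηap : ∀ tw, η tw = γ tw - tt • w tw := fun tw => rfl
  have hη0 : η 0 = 0 := by rw [hηap 0, hγ0, hw0]; simp
  have hη1 : η 1 = e := by rw [hηap 1, hγ1, hw1]; simp
  have hmvt : ∀ tw : unitInterval, ∃ ξ ∈ Set.Ioo (0:ℝ) tt,
      J (η tw) = J (γ tw) - g (tw, ξ) * tt := by
    intro tw
    set φ : ℝ → ℝ := fun s' => J (γ tw - s' • w tw) with hφ
    have hd : ∀ s' : ℝ, HasDerivAt φ (-(g (tw, s'))) s' := by
      intro s'
      have hin : HasDerivAt (fun s'' : ℝ => γ tw - s'' • w tw) (-(w tw)) s' := by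
        have h1 : HasDerivAt (fun s'' : ℝ => s'' • w tw) ((1:ℝ) • w tw) s' :=
          (hasDerivAt_id s').smul_const (w tw)
        rw [one_smul] at h1
        exact h1.const_sub (γ tw)
      have hout := (hJd (γ tw - s' • w tw)).hasFDerivAt.comp_hasDerivAt s' hin
      have heq2 : (fderiv ℝ J (γ tw - s' • w tw)) (-(w tw)) = -(g (tw, s')) := by
        rw [map_neg]
      rwa [heq2] at hout
    obtain ⟨ξ, hξ, hslope⟩ := exists_hasDerivAt_eq_slope φ (fun s' => -(g (tw, s'))) httpos
      (fun s' _ => (hd s').continuousAt.continuousWithinAt) (fun s' _ => hd s')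
    refine ⟨ξ, hξ, ?_⟩
    have hφ0 : φ 0 = J (γ tw) := by rw [hφ]; simp
    have hφt : φ tt = J (η tw) := by rw [hφ, hηap tw]
    have htt0 : tt - 0 ≠ 0 := by simpa using httpos.ne'
    rw [eq_div_iff htt0] at hslope
    rw [hφt, hφ0] at hslope
    linarith [hslope]
  have hup : ∀ tw, J (η tw) ≤ Phi J γ - 4*ε*tt := by
    intro tw
    obtain ⟨ξ, hξ, heqJ⟩ := hmvt tw
    by_cases htwA : tw ∈ A
    · have h4 : 4*ε < g (tw, ξ) := ht₁ tw htwA ξ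
        ⟨hξ.1.le, hξ.2.le.trans (min_le_left _ _)⟩
      have h5 : J (γ tw) ≤ Phi J γ := le_phi hJc γ tw
      rw [heqJ]
      nlinarith [httpos]
    · have h4 : J (γ tw) < Phi J γ - κ/2 := by
        rw [hA] at htwA
        simp only [Set.mem_setOf_eq, not_le] at htwA
        exact htwA
      have h5 : |g (tw, ξ)| ≤ C := hC' tw ξ
        ⟨hξ.1.le, hξ.2.le.trans (htt1.trans (by norm_num))⟩
      have h6 : -(g (tw, ξ)) ≤ C := by rw [abs_le] at h5; linarith [h5.1]
      have h7 : -(g (tw, ξ)) * tt ≤ C * tt := mul_le_mul_of_nonneg_right h6 httpos.le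
      rw [heqJ]
      nlinarith [httκ]
  have hPhiη : Phi J η ≤ Phi J γ - 4*ε*tt := phi_le η hup
  have hpD : pD γ η ≤ 2*tt := by
    refine pD_le γ η fun tw => ?_
    have h1 : γ tw - η tw = tt • w tw := by rw [hηap tw]; abel
    have h2 : ‖γ tw - η tw‖ ≤ tt * (1 + ‖γ tw‖) := by
      rw [h1, norm_smul, Real.norm_eq_abs, abs_of_nonneg httpos.le]
      exact mul_le_mul_of_nonneg_left (hwnorm tw) httpos.le
    have h3 : ‖γ tw‖ - tt * (1 + ‖γ tw‖) ≤ min ‖γ tw‖ ‖η tw‖ := by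
      refine le_min ?_ ?_
      · nlinarith [norm_nonneg (γ tw), httpos.le]
      · have h3' := norm_sub_norm_le (γ tw) (η tw)
        linarith [h2]
    have hden : (0:ℝ) < (1 - tt) * (1 + ‖γ tw‖) := by
      have := norm_nonneg (γ tw)
      nlinarith [htt1]
    have h4 : (1 - tt) * (1 + ‖γ tw‖) ≤ 1 + min ‖γ tw‖ ‖η tw‖ := by nlinarith [h3]
    refine (dd_le_edg _ _).trans ?_
    rw [edg]
    have h5 : ‖γ tw - η tw‖ / (1 + min ‖γ tw‖ ‖η tw‖) ≤
        (tt * (1 + ‖γ tw‖)) / ((1 - tt) * (1 + ‖γ tw‖)) :=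
      div_le_div₀ (by positivity) h2 hden h4
    refine h5.trans ?_
    have hγpos : (0:ℝ) < 1 + ‖γ tw‖ := by positivity
    rw [mul_comm tt _, mul_comm (1-tt) _, mul_div_mul_left _ _ hγpos.ne']
    rw [div_le_iff₀ (by linarith : (0:ℝ) < 1 - tt)]
    nlinarith [httpos.le, htt1]
  have hfinal := hek η hη0 hη1
  have h6 : ε * pD γ η ≤ ε * (2*tt) := mul_le_mul_of_nonneg_left hpD hε.le
  nlinarith [mul_pos hε httpos]

end MP

open MP in
/-- Mountain Pass Theorem under the weak Cerami–Palais–Smale condition. -/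
theorem stmt0
    {X W : Type*} [NormedAddCommGroup X] [NormedSpace ℝ X] [CompleteSpace X]
    [NormedAddCommGroup W] [NormedSpace ℝ W] [CompleteSpace W]
    (ι : X →L[ℝ] W) (hι : Function.Injective ι)
    (J : X → ℝ) (hJ : ContDiff ℝ 1 J) (hJ0 : J 0 = 0)
    (hwCPS : ∀ β : ℝ, ∀ u : ℕ → X,
      Tendsto (fun n => J (u n)) atTop (𝓝 β) →
      Tendsto (fun n => ‖fderiv ℝ J (u n)‖ * (1 + ‖u n‖)) atTop (𝓝 0) →
      ∃ v : X, (∃ φ : ℕ → ℕ, StrictMono φ ∧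
          Tendsto (fun n => ‖ι (u (φ n)) - ι v‖) atTop (𝓝 0)) ∧
        J v = β ∧ fderiv ℝ J v = 0)
    (r ϱ : ℝ) (hr : 0 < r) (hϱ : 0 < ϱ) (e : X)
    (hmp1 : ∀ u : X, ‖ι u‖ = r → ϱ ≤ J u)
    (hmp2 : r < ‖ι e‖) (hmp3 : J e < ϱ) :
    ∃ u : X, fderiv ℝ J u = 0 ∧
      J u = sInf {c : ℝ | ∃ γ : C(unitInterval, X),
        γ 0 = 0 ∧ γ 1 = e ∧ c = ⨆ σ : unitInterval, J (γ σ)} ∧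
      ϱ ≤ J u := by
  classical
  set S : Set ℝ := {c : ℝ | ∃ γ : C(unitInterval, X),
    γ 0 = 0 ∧ γ 1 = e ∧ c = ⨆ σ : unitInterval, J (γ σ)} with hS
  have hJc : Continuous J := hJ.continuous
  have hPhiS : ∀ γ : C(unitInterval, X), γ 0 = 0 → γ 1 = e → MP.Phi J γ ∈ S :=
    fun γ h0 h1 => ⟨γ, h0, h1, rfl⟩
  obtain ⟨γl, hγl0, hγl1⟩ : ∃ γ : C(unitInterval, X), γ 0 = 0 ∧ γ 1 = e := by
    refine ⟨⟨fun tv => (tv : ℝ) • e, (continuous_subtype_val).smul continuous_const⟩, ?_, ?_⟩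
    · show ((0 : unitInterval) : ℝ) • e = 0
      norm_num
    · show ((1 : unitInterval) : ℝ) • e = e
      norm_num
  have hSne : S.Nonempty := ⟨MP.Phi J γl, hPhiS γl hγl0 hγl1⟩
  have hlb : ∀ γ : C(unitInterval, X), γ 0 = 0 → γ 1 = e → ϱ ≤ MP.Phi J γ := by
    intro γ h0 h1
    set f : ℝ → ℝ := fun x => ‖ι (γ (Set.projIcc 0 1 zero_le_one x))‖ with hf
    have hfc : Continuous f :=
      continuous_norm.comp (ι.continuous.comp (γ.continuous.comp continuous_projIcc))
    have hp0 : Set.projIcc (0:ℝ) 1 zero_le_one 0 = (0 : unitInterval) := by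
      apply Subtype.ext
      simp [Set.projIcc]
    have hp1 : Set.projIcc (0:ℝ) 1 zero_le_one 1 = (1 : unitInterval) := by
      apply Subtype.ext
      simp [Set.projIcc]
    have hf0 : f 0 = 0 := by
      rw [hf]; dsimp only
      rw [hp0, h0]
      simp
    have hf1 : f 1 = ‖ι e‖ := by
      rw [hf]; dsimp only
      rw [hp1, h1]
    have hmem : r ∈ Set.Icc (f 0) (f 1) := by
      rw [hf0, hf1]
      exact ⟨hr.le, hmp2.le⟩
    obtain ⟨x, -, hfx⟩ := intermediate_value_Icc (zero_le_one (α := ℝ))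
      hfc.continuousOn hmem
    have hJx : ϱ ≤ J (γ (Set.projIcc 0 1 zero_le_one x)) := hmp1 _ hfx
    exact hJx.trans (MP.le_phi hJc γ _)
  have hSlb : ∀ c ∈ S, ϱ ≤ c := by
    rintro c ⟨γ, h0, h1, rfl⟩
    exact hlb γ h0 h1
  have hSbdd : BddBelow S := ⟨ϱ, hSlb⟩
  set c := sInf S with hc
  have hϱc : ϱ ≤ c := le_csInf hSne hSlb
  set κ₀ : ℝ := min ϱ (ϱ - J e) / 2 with hκ₀
  have hκ₀pos : 0 < κ₀ := by
    rw [hκ₀]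
    have : 0 < min ϱ (ϱ - J e) := lt_min hϱ (by linarith)
    linarith
  have hκ₀ϱ : κ₀ ≤ ϱ/2 := by
    rw [hκ₀]
    have := min_le_left ϱ (ϱ - J e)
    linarith
  have hκ₀e : κ₀ ≤ (ϱ - J e)/2 := by
    rw [hκ₀]
    have := min_le_right ϱ (ϱ - J e)
    linarith
  have key : ∀ n : ℕ, ∃ u : X, (c - 1/((n:ℝ)+1) ≤ J u ∧ J u ≤ c + 1/((n:ℝ)+1)) ∧
      ‖fderiv ℝ J u‖ * (1 + ‖u‖) ≤ 5 * (1/((n:ℝ)+1)) := by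
    intro n
    set εn : ℝ := 1/((n:ℝ)+1) with hεn
    have hεnpos : 0 < εn := by rw [hεn]; positivity
    have hεn1 : εn ≤ 1 := by
      rw [hεn, div_le_one (by positivity)]
      exact le_add_of_nonneg_left (Nat.cast_nonneg n)
    obtain ⟨a, haS, halt⟩ := Real.lt_sInf_add_pos hSne (show (0:ℝ) < εn^2 by positivity)
    obtain ⟨γ', hγ'0, hγ'1, haeq⟩ := haS
    have halt' : MP.Phi J γ' < c + εn^2 := by
      rw [haeq] at halt
      exact halt
    obtain ⟨γ, hγ0, hγ1, hγle, hγek⟩ := MP.ekeland hJc hlb hεnpos γ' hγ'0 hγ'1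
    set κn : ℝ := min κ₀ εn with hκn
    have hκnpos : 0 < κn := lt_min hκ₀pos hεnpos
    have hκnκ₀ : κn ≤ κ₀ := min_le_left _ _
    have hκnεn : κn ≤ εn := min_le_right _ _
    have hcγ : c ≤ MP.Phi J γ := csInf_le hSbdd (hPhiS γ hγ0 hγ1)
    have hend0 : J (γ 0) < MP.Phi J γ - κn := by
      rw [hγ0, hJ0]
      linarith
    have hend1 : J (γ 1) < MP.Phi J γ - κn := by
      rw [hγ1]
      linarith
    obtain ⟨tv, htv1, htv2⟩ := MP.perturb hJ hεnpos hκnpos γ hγ0 hγ1 hend0 hend1 hγek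
    refine ⟨γ tv, ⟨?_, ?_⟩, ?_⟩
    · linarith
    · have h5 := MP.le_phi hJc γ tv
      have hεn2 : εn^2 ≤ εn := by nlinarith
      linarith [hγle.trans_lt halt']
    · exact htv2
  choose u hu1 hu2 using key
  have hten1 : Tendsto (fun n => J (u n)) atTop (𝓝 c) := by
    have hl : Tendsto (fun n : ℕ => c - 1/((n:ℝ)+1)) atTop (𝓝 (c - 0)) :=
      tendsto_const_nhds.sub tendsto_one_div_add_atTop_nhds_zero_nat
    have hu' : Tendsto (fun n : ℕ => c + 1/((n:ℝ)+1)) atTop (𝓝 (c + 0)) :=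
      tendsto_const_nhds.add tendsto_one_div_add_atTop_nhds_zero_nat
    rw [sub_zero] at hl
    rw [add_zero] at hu'
    exact tendsto_of_tendsto_of_tendsto_of_le_of_le hl hu'
      (fun n => (hu1 n).1) (fun n => (hu1 n).2)
  have hten2 : Tendsto (fun n => ‖fderiv ℝ J (u n)‖ * (1 + ‖u n‖)) atTop (𝓝 0) := by
    have hupp : Tendsto (fun n : ℕ => 5 * (1/((n:ℝ)+1))) atTop (𝓝 (5 * 0)) :=
      tendsto_one_div_add_atTop_nhds_zero_nat.const_mul 5
    rw [mul_zero] at hupp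
    refine tendsto_of_tendsto_of_tendsto_of_le_of_le tendsto_const_nhds hupp
      (fun n => ?_) (fun n => hu2 n)
    have h1 := norm_nonneg (fderiv ℝ J (u n))
    have h2 := norm_nonneg (u n)
    positivity
  obtain ⟨v, -, hJv, hdv⟩ := hwCPS c u hten1 hten2
  exact ⟨v, hdv, hJv, by rw [hJv]; exact hϱc⟩
end

section
/- Let N ≥ 1, p > 1, α₀ > 0, α₃ > 0 and μ > α₃. Let A : ℝ × ℝ^N → ℝ be continuously differentiable and satisfy, for all (t,ξ) ∈ ℝ × ℝ^N: A(t,ξ) ≥ α₀(|ξ|^p + |t|^p), and μ A(t,ξ) − ∇_ξA(t,ξ)·ξ − ∂_tA(t,ξ)·t ≥ α₃ A(t,ξ). Then A(ρt, ρξ) ≤ ρ^{μ−α₃} A(t,ξ) for all (t,ξ) ∈ ℝ × ℝ^N and all ρ ≥ 1. -/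
theorem stmt4 {N : ℕ} (hN : 1 ≤ N) (p : ℝ) (hp : 1 < p)
    (α₀ α₃ μ : ℝ) (hα₀ : 0 < α₀) (hα₃ : 0 < α₃) (hμ : α₃ < μ)
    (A : ℝ × EuclideanSpace ℝ (Fin N) → ℝ) (hA : ContDiff ℝ 1 A)
    (H2 : ∀ (t : ℝ) (ξ : EuclideanSpace ℝ (Fin N)),
      α₀ * (‖ξ‖ ^ p + |t| ^ p) ≤ A (t, ξ))
    (H6 : ∀ (t : ℝ) (ξ : EuclideanSpace ℝ (Fin N)),
      α₃ * A (t, ξ) ≤ μ * A (t, ξ) - fderiv ℝ A (t, ξ) (0, ξ) - fderiv ℝ A (t, ξ) (t, 0)) :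
    ∀ (t : ℝ) (ξ : EuclideanSpace ℝ (Fin N)) (ρ : ℝ), 1 ≤ ρ →
      A (ρ * t, ρ • ξ) ≤ ρ ^ (μ - α₃) * A (t, ξ) := by
  intro t ξ ρ hρ
  set c : ℝ := μ - α₃ with hc
  have hc0 : 0 < c := sub_pos.mpr hμ
  have hA0 : ∀ x : ℝ × EuclideanSpace ℝ (Fin N), 0 ≤ A x := by
    intro x
    refine le_trans ?_ (H2 x.1 x.2)
    have h1 : (0:ℝ) ≤ ‖x.2‖ ^ p := Real.rpow_nonneg (norm_nonneg _) p
    have h2 : (0:ℝ) ≤ |x.1| ^ p := Real.rpow_nonneg (abs_nonneg _) p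
    positivity
  set γ : ℝ → ℝ × EuclideanSpace ℝ (Fin N) := fun s => (s * t, s • ξ) with hγdef
  have hγd : ∀ s : ℝ, HasDerivAt γ (t, ξ) s := by
    intro s
    have h1 : HasDerivAt (fun s : ℝ => s * t) t s := by
      simpa using (hasDerivAt_id s).mul_const t
    have h2 : HasDerivAt (fun s : ℝ => s • ξ) ξ s := by
      simpa using (hasDerivAt_id s).smul_const ξ
    exact h1.prodMk h2
  set F : ℝ → ℝ := fun s => A (γ s) with hFdef
  have hFd : ∀ s : ℝ, HasDerivAt F (fderiv ℝ A (γ s) (t, ξ)) s := fun s =>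
    ((hA.differentiable one_ne_zero (γ s)).hasFDerivAt).comp_hasDerivAt s (hγd s)
  have hFcont : Continuous F := hA.continuous.comp (by fun_prop)
  -- key derivative bound
  have key : ∀ s : ℝ, 0 < s → fderiv ℝ A (γ s) (t, ξ) ≤ c / s * F s := by
    intro s hs
    set D := fderiv ℝ A (γ s) with hD
    have hsmul : γ s = s • ((t, ξ) : ℝ × EuclideanSpace ℝ (Fin N)) := by
      simp [hγdef, Prod.smul_def, smul_eq_mul]
    have h1 : D (γ s) = s * D (t, ξ) := by
      rw [hsmul, D.map_smul]; simp
    have h2 : D (γ s) = D (s * t, 0) + D (0, s • ξ) := by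
      have : (γ s) = ((s * t, 0) : ℝ × EuclideanSpace ℝ (Fin N)) + (0, s • ξ) := by
        simp [hγdef, Prod.ext_iff]
      rw [this, D.map_add]
    have h6 := H6 (s * t) (s • ξ)
    have hFs : F s = A (s * t, s • ξ) := rfl
    have hDe : D = fderiv ℝ A (s * t, s • ξ) := by
      simp [hD, hγdef]
    have hsum : D (s * t, 0) + D (0, s • ξ) ≤ c * F s := by
      rw [hDe, hFs, hc, sub_mul]; linarith [h6]
    have : s * D (t, ξ) ≤ c * F s := by rw [← h1, h2]; exact hsum
    rw [div_mul_eq_mul_div, le_div_iff₀ hs]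
    linarith [this]
  -- the auxiliary function
  set h : ℝ → ℝ := fun s => s ^ (-c) * F s with hhdef
  have hhd : ∀ s : ℝ, 0 < s →
      HasDerivAt h ((-c) * s ^ (-c - 1) * F s + s ^ (-c) * fderiv ℝ A (γ s) (t, ξ)) s := by
    intro s hs
    have h1 : HasDerivAt (fun s : ℝ => s ^ (-c)) ((-c) * s ^ (-c - 1)) s :=
      Real.hasDerivAt_rpow_const (Or.inl hs.ne')
    exact h1.mul (hFd s)
  have hanti : AntitoneOn h (Set.Ici 1) := by
    refine antitoneOn_of_deriv_nonpos (convex_Ici 1) ?_ ?_ ?_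
    · apply ContinuousOn.mul ?_ hFcont.continuousOn
      intro x hx
      have hx1 : (1:ℝ) ≤ x := hx
      exact (Real.continuousAt_rpow_const x (-c) (Or.inl (by linarith))).continuousWithinAt
    · intro x hx
      rw [interior_Ici] at hx
      have hx0 : 0 < x := lt_trans one_pos hx
      exact ((hhd x hx0).differentiableAt).differentiableWithinAt
    · intro x hx
      rw [interior_Ici] at hx
      have hx0 : 0 < x := lt_trans one_pos hx
      rw [(hhd x hx0).deriv]
      have hk := key x hx0
      have hxc : (0:ℝ) < x ^ (-c) := Real.rpow_pos_of_pos hx0 _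
      have hmul : x ^ (-c) * fderiv ℝ A (γ x) (t, ξ) ≤ x ^ (-c) * (c / x * F x) :=
        mul_le_mul_of_nonneg_left hk hxc.le
      have heq : x ^ (-c) * (c / x * F x) = c * x ^ (-c - 1) * F x := by
        have : x ^ (-c - 1) = x ^ (-c) / x := by
          rw [Real.rpow_sub hx0, Real.rpow_one]
        rw [this]; field_simp
      calc -c * x ^ (-c - 1) * F x + x ^ (-c) * fderiv ℝ A (γ x) (t, ξ)
          ≤ -c * x ^ (-c - 1) * F x + x ^ (-c) * (c / x * F x) :=
            add_le_add_right hmul _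
        _ = -c * x ^ (-c - 1) * F x + c * x ^ (-c - 1) * F x := by rw [heq]
        _ = 0 := by ring
  have h1le : h ρ ≤ h 1 := hanti Set.self_mem_Ici (Set.mem_Ici.mpr hρ) hρ
  have hh1 : h 1 = A (t, ξ) := by
    simp [hhdef, hFdef, hγdef]
  have hρ0 : 0 < ρ := lt_of_lt_of_le one_pos hρ
  have hρc : (0:ℝ) < ρ ^ c := Real.rpow_pos_of_pos hρ0 _
  have : ρ ^ (-c) * F ρ ≤ A (t, ξ) := by rw [← hh1]; exact h1le
  have hfin : F ρ ≤ ρ ^ c * A (t, ξ) := by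
    have := mul_le_mul_of_nonneg_left this hρc.le
    calc F ρ = ρ ^ c * (ρ ^ (-c) * F ρ) := by
          rw [← mul_assoc, ← Real.rpow_add hρ0]; simp
      _ ≤ ρ ^ c * A (t, ξ) := mul_le_mul_of_nonneg_left ‹ρ ^ (-c) * F ρ ≤ A (t, ξ)› hρc.le
  simpa [hFdef, hγdef, hc] using hfin
end

section
/- Let 0 < p ≤ q, μ > 0 and a₁, a₂ > 0. Let G : ℝ → ℝ be differentiable and satisfy both 0 < μ G(t) ≤ G'(t)·t for all t ≠ 0, and |G(t)| ≤ (a₁/p)|t|^p + (a₂/q)|t|^q for all t ∈ ℝ. Then μ ≤ q. -/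
theorem stmt8 (p q μ a₁ a₂ : ℝ) (hp : 0 < p) (hpq : p ≤ q) (hμ : 0 < μ)
    (ha₁ : 0 < a₁) (ha₂ : 0 < a₂)
    (G : ℝ → ℝ) (hG : Differentiable ℝ G)
    (hAR : ∀ t : ℝ, t ≠ 0 → 0 < μ * G t ∧ μ * G t ≤ deriv G t * t)
    (hbound : ∀ t : ℝ, |G t| ≤ (a₁ / p) * |t| ^ p + (a₂ / q) * |t| ^ q) :
    μ ≤ q := by
  by_contra hlt
  push_neg at hlt
  set F : ℝ → ℝ := fun t => G t * t ^ (-μ) with hFdef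
  -- F is monotone on [1, ∞)
  have hderiv : ∀ x : ℝ, 0 < x →
      HasDerivAt F (deriv G x * x ^ (-μ) + G x * (-μ * x ^ (-μ - 1))) x := by
    intro x hx
    have h1 : HasDerivAt G (deriv G x) x := (hG x).hasDerivAt
    have h2 : HasDerivAt (fun t : ℝ => t ^ (-μ)) (-μ * x ^ (-μ - 1)) x :=
      Real.hasDerivAt_rpow_const (Or.inl hx.ne')
    exact h1.mul h2
  have hmono : MonotoneOn F (Set.Ici (1:ℝ)) := by
    apply monotoneOn_of_deriv_nonneg (convex_Ici 1)
    · exact ContinuousOn.mono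
        (fun x hx => ((hderiv x (lt_of_lt_of_le one_pos hx)).continuousAt.continuousWithinAt))
        le_rfl
    · intro x hx
      rw [interior_Ici] at hx
      exact (hderiv x (lt_trans one_pos hx)).differentiableAt.differentiableWithinAt
    · intro x hx
      rw [interior_Ici] at hx
      have hx0 : (0:ℝ) < x := lt_trans one_pos hx
      rw [(hderiv x hx0).deriv]
      have hAR' := hAR x hx0.ne'
      have hpow : (0:ℝ) < x ^ (-μ - 1) := Real.rpow_pos_of_pos hx0 _
      have key : deriv G x * x ^ (-μ) + G x * (-μ * x ^ (-μ - 1))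
          = x ^ (-μ - 1) * (deriv G x * x - μ * G x) := by
        have : x ^ (-μ) = x ^ (-μ - 1) * x := by
          rw [← Real.rpow_add_one hx0.ne']; ring_nf
        rw [this]; ring
      rw [key]
      have := hAR'.2
      nlinarith
  have hG1 : 0 < G 1 := by
    have := (hAR 1 one_ne_zero).1
    nlinarith
  set C : ℝ := a₁ / p + a₂ / q with hCdef
  have hq : 0 < q := lt_of_lt_of_le hp hpq
  -- for t ≥ 1, G 1 * t^(μ - q) ≤ C
  have hbd : ∀ t : ℝ, 1 ≤ t → G 1 * t ^ (μ - q) ≤ C := by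
    intro t ht
    have ht0 : (0:ℝ) < t := lt_of_lt_of_le one_pos ht
    have hFle : F 1 ≤ F t := hmono (Set.self_mem_Ici) ht ht
    have hF1 : F 1 = G 1 := by simp [hFdef]
    have hGt : G 1 * t ^ μ ≤ G t := by
      have hpos : (0:ℝ) < t ^ μ := Real.rpow_pos_of_pos ht0 _
      have hFle' : G 1 ≤ G t * t ^ (-μ) := by
        rw [hF1] at hFle; simpa [hFdef] using hFle
      have : G 1 * t ^ μ ≤ G t * t ^ (-μ) * t ^ μ := by nlinarith
      calc G 1 * t ^ μ ≤ G t * t ^ (-μ) * t ^ μ := this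
        _ = G t := by
          rw [mul_assoc, ← Real.rpow_add ht0]
          simp
    have hup : G t ≤ C * t ^ q := by
      have h1 := hbound t
      have habs : |t| = t := abs_of_pos ht0
      have hpq' : t ^ p ≤ t ^ q := Real.rpow_le_rpow_of_exponent_le ht hpq
      have htq : (0:ℝ) < t ^ q := Real.rpow_pos_of_pos ht0 _
      have := le_abs_self (G t)
      rw [habs] at h1
      have ha1p : 0 < a₁ / p := div_pos ha₁ hp
      have ha2q : 0 < a₂ / q := div_pos ha₂ hq
      calc G t ≤ (a₁ / p) * t ^ p + (a₂ / q) * t ^ q := le_trans this h1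
        _ ≤ (a₁ / p) * t ^ q + (a₂ / q) * t ^ q := by nlinarith
        _ = C * t ^ q := by rw [hCdef]; ring
    have htq : (0:ℝ) < t ^ q := Real.rpow_pos_of_pos ht0 _
    have hdiv : t ^ (μ - q) = t ^ μ / t ^ q := Real.rpow_sub ht0 μ q
    rw [hdiv, ← mul_div_assoc, div_le_iff₀ htq]
    exact le_trans hGt hup
  -- contradiction via t^(μ-q) → ∞
  have htend : Filter.Tendsto (fun t : ℝ => t ^ (μ - q)) Filter.atTop Filter.atTop :=
    tendsto_rpow_atTop (by linarith)
  have hev : ∀ᶠ t : ℝ in Filter.atTop, C / G 1 < t ^ (μ - q) :=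
    htend.eventually_gt_atTop _
  have hev2 : ∀ᶠ t : ℝ in Filter.atTop, (1:ℝ) ≤ t := Filter.eventually_ge_atTop 1
  obtain ⟨t, h1, h2⟩ := (hev.and hev2).exists
  have := hbd t h2
  have : t ^ (μ - q) ≤ C / G 1 := by
    rw [le_div_iff₀ hG1]; nlinarith
  linarith
end
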